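/- arXiv:1702.04679 — 9 statements merged into one kernel-verified Lean document; each statement's English description precedes it below -/
import Mathlib

section
/- A Boolean relation ρ ⊆ {0,1}^r is essentially a downset (it can be written as a conjunction of a downset and binary equality relations, i.e., identifying duplicate coordinates yields a downset) if and only if it is invariant under the operation sub(x,y) = min(x, ¬y) applied componentwise. -/
/-!
`sub` is set difference `x \ y` in the Boolean algebra `ι → Bool`, so a `sub`-closed relation
is also closed under `x ⊓ y = x \ (x \ y)`. If coordinates `i` and `j` are not duplicates,
some member of `ρ` differs on them; if it is false at `i` and true at `j`, subtracting it
from any `x ∈ ρ` with `x i = true` gives one that is true at `i` and false at `j`. Meeting such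
separators yields `z ∈ ρ` true at `i` and false on the support of a duplicate-respecting
`y ≤ x` with `y i = false`, so `x \ z ∈ ρ` lies strictly between `y` and `x`; well-founded
induction on `x` reaches `y`.
-/

/-- The Boolean operation `sub(x,y) = min(x, ¬y)`. -/
def bsub (a b : Bool) : Bool := a && !b

/-- A relation `ρ ⊆ {0,1}^r` is essentially a downset: there is a map `s` sending every
coordinate to a representative duplicate coordinate such that every member of `ρ` respects
these duplications, and within tuples respecting the duplications, `ρ` is downward closed
(i.e., removing duplicate coordinates yields a downset). -/
def EssentiallyDownset {r : ℕ} (ρ : Set (Fin r → Bool)) : Prop :=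
  ∃ s : Fin r → Fin r,
    (∀ x ∈ ρ, ∀ i, x i = x (s i)) ∧
    (∀ x ∈ ρ, ∀ y : Fin r → Bool, (∀ i, y i = y (s i)) → (∀ i, y i ≤ x i) → y ∈ ρ)

theorem Bool.sdiff_eq_and_not (a b : Bool) : a \ b = (a && !b) := rfl

def SdiffClosed {α : Type*} [SDiff α] (ρ : Set α) : Prop :=
  ∀ x ∈ ρ, ∀ y ∈ ρ, x \ y ∈ ρ

theorem SdiffClosed.inf_mem {α : Type*} [GeneralizedBooleanAlgebra α] {ρ : Set α}
    (hρ : SdiffClosed ρ) {x y : α} (hx : x ∈ ρ) (hy : y ∈ ρ) : x ⊓ y ∈ ρ :=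
  sdiff_sdiff_right_self (x := x) ▸ hρ x hx _ (hρ x hx y hy)

def duplicateSetoid {ι β : Type*} (ρ : Set (ι → β)) : Setoid ι where
  r i j := ∀ z ∈ ρ, z i = z j
  iseqv := ⟨fun _ _ _ => rfl, fun h z hz => (h z hz).symm,
    fun h h' z hz => (h z hz).trans (h' z hz)⟩

section SdiffClosed

variable {ι : Type*} {ρ : Set (ι → Bool)}

theorem SdiffClosed.exists_mem_apply_true_apply_false (hρ : SdiffClosed ρ) {x : ι → Bool}
    (hx : x ∈ ρ) {i j : ι} (hxi : x i = true) (hij : ¬ duplicateSetoid ρ i j) :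
    ∃ w ∈ ρ, w i = true ∧ w j = false := by
  obtain ⟨z, hz, hzij⟩ : ∃ z ∈ ρ, z i ≠ z j := by
    by_contra! h
    exact hij h
  cases hzi : z i
  · -- `z` separates the coordinates the wrong way round; `x \ z` swaps them back
    have hzj : z j = true := by simpa [hzi] using hzij.symm
    exact ⟨x \ z, hρ x hx z hz, by simp [Bool.sdiff_eq_and_not, hxi, hzi],
      by simp [Bool.sdiff_eq_and_not, hzj]⟩
  · exact ⟨z, hz, hzi, by simpa [hzi] using hzij.symm⟩

theorem SdiffClosed.exists_mem_apply_true_forall_apply_false (hρ : SdiffClosed ρ)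
    {x : ι → Bool} (hx : x ∈ ρ) {i : ι} (hxi : x i = true) (T : Finset ι)
    (hT : ∀ j ∈ T, ¬ duplicateSetoid ρ i j) :
    ∃ z ∈ ρ, z i = true ∧ ∀ j ∈ T, z j = false := by
  classical
  induction T using Finset.induction_on with
  | empty => exact ⟨x, hx, hxi, by simp⟩
  | insert j T _ ih =>
    obtain ⟨z, hz, hzi, hzT⟩ := ih fun k hk => hT k (Finset.mem_insert_of_mem hk)
    obtain ⟨w, hw, hwi, hwj⟩ :=
      hρ.exists_mem_apply_true_apply_false hx hxi (hT j (Finset.mem_insert_self j T))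
    refine ⟨z ⊓ w, hρ.inf_mem hz hw, by simp [hzi, hwi], ?_⟩
    simp only [Finset.mem_insert, forall_eq_or_imp]
    exact ⟨by simp [hwj], fun k hk => by simp [hzT k hk]⟩

theorem SdiffClosed.mem_of_le [Finite ι] (hρ : SdiffClosed ρ) {x y : ι → Bool} (hx : x ∈ ρ)
    (hyx : y ≤ x) (hy : ∀ i j, duplicateSetoid ρ i j → y i = y j) : y ∈ ρ := by
  induction x using WellFoundedLT.induction with
  | _ x ih =>
  obtain rfl | hlt := hyx.eq_or_lt
  · exact hx
  obtain ⟨i, hi⟩ := (Pi.lt_def.mp hlt).2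
  obtain ⟨hyi, hxi⟩ := Bool.lt_iff.mp hi
  obtain ⟨z, hz, hzi, hzy⟩ := hρ.exists_mem_apply_true_forall_apply_false hx hxi
    (Set.toFinite {j | y j = true}).toFinset fun j hj hij => by simp_all [hy i j hij]
  refine ih (x \ z) ?_ (hρ x hx z hz) fun j => ?_
  · refine lt_of_le_of_ne sdiff_le fun h => ?_
    simpa [Bool.sdiff_eq_and_not, hxi, hzi] using congrFun h i
  · cases hyj : y j
    · exact Bool.false_le _
    · have hxj : x j = true := Bool.eq_true_of_true_le (hyj ▸ hyx j)
      simp_all [Bool.sdiff_eq_and_not]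

end SdiffClosed

theorem EssentiallyDownset.sdiffClosed {r : ℕ} {ρ : Set (Fin r → Bool)}
    (h : EssentiallyDownset ρ) : SdiffClosed ρ := by
  obtain ⟨s, hdup, hdown⟩ := h
  intro x hx y hy
  exact hdown x hx _ (fun i => by simp [Bool.sdiff_eq_and_not, hdup x hx i, hdup y hy i])
    fun _ => sdiff_le

theorem SdiffClosed.essentiallyDownset {r : ℕ} {ρ : Set (Fin r → Bool)}
    (h : SdiffClosed ρ) : EssentiallyDownset ρ := by
  let s (i : Fin r) : Fin r := (Quotient.mk (duplicateSetoid ρ) i).out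
  have hs (i : Fin r) : duplicateSetoid ρ i (s i) :=
    (duplicateSetoid ρ).symm' (Quotient.mk_out i)
  have hs_congr {i j : Fin r} (hij : duplicateSetoid ρ i j) : s i = s j :=
    congrArg Quotient.out (Quotient.sound (s := duplicateSetoid ρ) hij)
  refine ⟨s, fun x hx i => hs i x hx, fun x hx y hy hyx => h.mem_of_le hx hyx fun i j hij => ?_⟩
  rw [hy i, hy j, hs_congr hij]

/-- A Boolean relation is essentially a downset iff it is invariant under `sub`. -/
theorem stmt4 {r : ℕ} (ρ : Set (Fin r → Bool)) :
    EssentiallyDownset ρ ↔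
      ∀ x ∈ ρ, ∀ y ∈ ρ, (fun i => bsub (x i) (y i)) ∈ ρ :=
  ⟨EssentiallyDownset.sdiffClosed, SdiffClosed.essentiallyDownset⟩
end

section
/- Any two distinct minimal optimal solutions to the Min-Cut problem are disjoint: if g is the cut function of an edge-weighted graph, and X, Y are distinct optimal solutions (nonempty proper subsets of V minimizing g) such that no proper nonempty subset of X or of Y is optimal, then X ∩ Y = ∅. -/
variable {V : Type*} [Fintype V] [DecidableEq V]

/-- The cut function of an undirected graph with symmetric edge weights `w`:
`g(X) = Σ_{u ∈ X, v ∉ X} w(u,v)` (each cut edge counted once when `w` is symmetric). -/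
def cutFun (w : V → V → NNRat) (X : Finset V) : NNRat :=
  ∑ u ∈ X, ∑ v ∈ Xᶜ, w u v

/-- A solution: a nonempty proper subset of the vertex set. -/
def IsCutSolution (X : Finset V) : Prop := X ≠ ∅ ∧ X ≠ Finset.univ

/-- An optimal solution to the Min-Cut problem. -/
def IsOptCut (w : V → V → NNRat) (X : Finset V) : Prop :=
  IsCutSolution X ∧ ∀ Y : Finset V, IsCutSolution Y → cutFun w X ≤ cutFun w Y

/-- A minimal optimal solution: optimal with no proper subset optimal. -/
def IsMinOptCut (w : V → V → NNRat) (X : Finset V) : Prop :=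
  IsOptCut w X ∧ ∀ Y : Finset V, Y ⊂ X → ¬ IsOptCut w Y

lemma cutFun_eq (w : V → V → NNRat) (X : Finset V) :
    cutFun w X = ∑ u : V, ∑ v : V, if u ∈ X ∧ v ∉ X then w u v else 0 := by
  rw [cutFun]
  have h1 : ∀ u : V, (∑ v : V, if u ∈ X ∧ v ∉ X then w u v else 0)
      = if u ∈ X then ∑ v ∈ Xᶜ, w u v else 0 := by
    intro u
    by_cases hu : u ∈ X <;> simp [hu]
    have h2 : ∀ x : V, (if x ∈ X then (0:NNRat) else w u x) = if x ∈ Xᶜ then w u x else 0 := by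
      intro x; by_cases hx : x ∈ X <;> simp [hx]
    simp only [h2, Finset.sum_ite_mem, Finset.univ_inter]
  simp only [h1, Finset.sum_ite_mem, Finset.univ_inter]

lemma cutFun_two (w : V → V → NNRat) (hw : ∀ u v, w u v = w v u) (X : Finset V) :
    cutFun w X + cutFun w X
      = ∑ u : V, ∑ v : V, if (u ∈ X) ≠ (v ∈ X) then w u v else 0 := by
  have hswap : cutFun w X = ∑ u : V, ∑ v : V, if v ∈ X ∧ u ∉ X then w u v else 0 := by
    rw [cutFun_eq, Finset.sum_comm]
    refine Finset.sum_congr rfl fun u _ => Finset.sum_congr rfl fun v _ => ?_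
    rw [hw]
  nth_rewrite 2 [hswap]
  rw [cutFun_eq w X, ← Finset.sum_add_distrib]
  refine Finset.sum_congr rfl fun u _ => ?_
  rw [← Finset.sum_add_distrib]
  refine Finset.sum_congr rfl fun v _ => ?_
  by_cases hu : u ∈ X <;> by_cases hv : v ∈ X <;> simp [hu, hv]

lemma posimodular (w : V → V → NNRat) (hw : ∀ u v, w u v = w v u) (X Y : Finset V) :
    cutFun w (X \ Y) + cutFun w (Y \ X) ≤ cutFun w X + cutFun w Y := by
  have key : cutFun w (X \ Y) + cutFun w (Y \ X) + (cutFun w (X \ Y) + cutFun w (Y \ X))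
      ≤ cutFun w X + cutFun w Y + (cutFun w X + cutFun w Y) := by
    have e1 := cutFun_two w hw (X \ Y)
    have e2 := cutFun_two w hw (Y \ X)
    have e3 := cutFun_two w hw X
    have e4 := cutFun_two w hw Y
    calc cutFun w (X \ Y) + cutFun w (Y \ X) + (cutFun w (X \ Y) + cutFun w (Y \ X))
        = (cutFun w (X \ Y) + cutFun w (X \ Y)) + (cutFun w (Y \ X) + cutFun w (Y \ X)) := by
          ring
      _ ≤ (cutFun w X + cutFun w X) + (cutFun w Y + cutFun w Y) := by
          rw [e1, e2, e3, e4, ← Finset.sum_add_distrib, ← Finset.sum_add_distrib]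
          refine Finset.sum_le_sum fun u _ => ?_
          rw [← Finset.sum_add_distrib, ← Finset.sum_add_distrib]
          refine Finset.sum_le_sum fun v _ => ?_
          simp only [Finset.mem_sdiff]
          by_cases ha : u ∈ X <;> by_cases hb : u ∈ Y <;> by_cases hc : v ∈ X <;>
            by_cases hd : v ∈ Y <;> simp [ha, hb, hc, hd]
      _ = cutFun w X + cutFun w Y + (cutFun w X + cutFun w Y) := by ring
  by_contra hcon
  push_neg at hcon
  exact absurd key (not_le.mpr (add_lt_add hcon hcon))

/-- Any two distinct minimal optimal solutions to the Min-Cut problem are disjoint. -/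
theorem stmt7 (w : V → V → NNRat) (hw : ∀ u v, w u v = w v u)
    (X Y : Finset V) (hX : IsMinOptCut w X) (hY : IsMinOptCut w Y) (hne : X ≠ Y) :
    Disjoint X Y := by
  by_contra hdis
  obtain ⟨a, haX, haY⟩ := Finset.not_disjoint_iff.mp hdis
  -- X and Y have equal (optimal) cut value
  have hXY : cutFun w X = cutFun w Y :=
    le_antisymm (hX.1.2 Y hY.1.1) (hY.1.2 X hX.1.1)
  by_cases hXsubY : X \ Y = ∅
  · have hsub : X ⊆ Y := Finset.sdiff_eq_empty_iff_subset.mp hXsubY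
    exact hY.2 X (Finset.ssubset_iff_subset_ne.mpr ⟨hsub, hne⟩) hX.1
  by_cases hYsubX : Y \ X = ∅
  · have hsub : Y ⊆ X := Finset.sdiff_eq_empty_iff_subset.mp hYsubX
    exact hX.2 Y (Finset.ssubset_iff_subset_ne.mpr ⟨hsub, fun h => hne h.symm⟩) hY.1
  -- Both differences are solutions
  have hXYne : X \ Y ≠ Finset.univ := fun h =>
    hX.1.1.2 (Finset.univ_subset_iff.mp (h ▸ Finset.sdiff_subset))
  have hYXne : Y \ X ≠ Finset.univ := fun h =>
    hY.1.1.2 (Finset.univ_subset_iff.mp (h ▸ Finset.sdiff_subset))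
  have hsolXY : IsCutSolution (X \ Y) := ⟨hXsubY, hXYne⟩
  have hsolYX : IsCutSolution (Y \ X) := ⟨hYsubX, hYXne⟩
  have h1 : cutFun w X ≤ cutFun w (X \ Y) := hX.1.2 _ hsolXY
  have h2 : cutFun w Y ≤ cutFun w (Y \ X) := hY.1.2 _ hsolYX
  have h3 := posimodular w hw X Y
  -- hence X \ Y is optimal
  have hopt : cutFun w (X \ Y) = cutFun w X := by
    have : cutFun w Y ≤ cutFun w (Y \ X) := h2
    have hXle : cutFun w (X \ Y) ≤ cutFun w X := by
      by_contra hlt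
      push_neg at hlt
      have : cutFun w X + cutFun w Y < cutFun w (X \ Y) + cutFun w (Y \ X) := by
        calc cutFun w X + cutFun w Y < cutFun w (X \ Y) + cutFun w Y :=
              add_lt_add_of_lt_of_le hlt le_rfl
          _ ≤ cutFun w (X \ Y) + cutFun w (Y \ X) := add_le_add le_rfl h2
      exact absurd h3 (not_le.mpr this)
    exact le_antisymm hXle h1
  have hoptXY : IsOptCut w (X \ Y) :=
    ⟨hsolXY, fun Z hZ => hopt ▸ hX.1.2 Z hZ⟩
  have hss : X \ Y ⊂ X := by
    refine Finset.ssubset_iff_of_subset Finset.sdiff_subset |>.mpr ⟨a, haX, ?_⟩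
    simp [haY]
  exact hX.2 _ hss hoptXY
end

section
/- Let J(X) = f(X) + g(X) be the objective of a Generalised Min-Cut instance, with f superadditive (hence increasing) and g the posimodular cut function of a weighted graph on V. Let X be an optimal solution to J (a nonempty proper subset of V minimizing J, with J(X) < ∞), and let Y be a minimal optimal solution to the Min-Cut problem for g. Then X ⊆ Y, or X ⊆ V\Y, or X is itself an optimal solution to the Min-Cut problem for g. -/
/-!
If `X` meets both `Y` and its complement, then `X \ Y` is a solution with `f (X \ Y) ≤ f X`,
so optimality of `X` for `J` forces `g X ≤ g (X \ Y)`. Posimodularity of `g` turns this into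
`g (Y \ X) ≤ g Y`; since `Y` is a minimal optimal cut, `Y \ X` must be empty, i.e. `Y ⊆ X`.
Then `f Y ≤ f X`, and comparing `J X ≤ J Y` gives `g X ≤ g Y`, so `X` is an optimal cut.
-/

variable {V : Type*} [Fintype V] [DecidableEq V]

theorem monotone_of_superadditive {α M : Type*} [DecidableEq α] [AddCommMonoid M] [PartialOrder M]
    [CanonicallyOrderedAdd M] {f : Finset α → M}
    (hf : ∀ A B, Disjoint A B → f A + f B ≤ f (A ∪ B)) : Monotone f := fun A C hAC =>
  calc f A ≤ f A + f (C \ A) := le_self_add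
    _ ≤ f (A ∪ C \ A) := hf A (C \ A) Finset.disjoint_sdiff
    _ = f C := by rw [Finset.union_sdiff_of_subset hAC]

theorem IsCutSolution.mono {α : Type*} [Fintype α] {X Z : Finset α} (hX : IsCutSolution X)
    (hZX : Z ⊆ X) (hZ : Z.Nonempty) : IsCutSolution Z :=
  ⟨hZ.ne_empty, fun h => hX.2 (Finset.univ_subset_iff.mp (h ▸ hZX))⟩

section Cut

variable {w : V → V → NNRat}

theorem cutFun_eq_sum_ite (X : Finset V) :
    cutFun w X = ∑ u, ∑ v, if u ∈ X ∧ v ∉ X then w u v else 0 := by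
  simp [cutFun, ite_and, Finset.sum_ite_mem, ← Finset.mem_compl]

theorem cutFun_add_cutFun (hw : ∀ u v, w u v = w v u) (X : Finset V) :
    cutFun w X + cutFun w X = ∑ u, ∑ v, if (u ∈ X ↔ v ∈ X) then 0 else w u v := by
  have hflip : cutFun w X = ∑ u, ∑ v, if v ∈ X ∧ u ∉ X then w u v else 0 := by
    rw [cutFun_eq_sum_ite, Finset.sum_comm]
    simp only [hw]
  nth_rw 2 [hflip]
  rw [cutFun_eq_sum_ite, ← Finset.sum_add_distrib]
  refine Finset.sum_congr rfl fun u _ => ?_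
  rw [← Finset.sum_add_distrib]
  refine Finset.sum_congr rfl fun v _ => ?_
  by_cases hu : u ∈ X <;> by_cases hv : v ∈ X <;> simp [hu, hv]

theorem cutFun_sdiff_add_cutFun_sdiff_le (hw : ∀ u v, w u v = w v u) (A B : Finset V) :
    cutFun w (A \ B) + cutFun w (B \ A) ≤ cutFun w A + cutFun w B := by
  -- The inequality fails termwise for the defining sums, but holds termwise once they are
  -- doubled and symmetrised with `hw`.
  suffices h : 2 * (cutFun w (A \ B) + cutFun w (B \ A)) ≤ 2 * (cutFun w A + cutFun w B) from
    le_of_mul_le_mul_left h (two_pos : (0 : NNRat) < 2)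
  rw [two_mul, two_mul, add_add_add_comm, add_add_add_comm (cutFun w A)]
  simp only [cutFun_add_cutFun hw, ← Finset.sum_add_distrib]
  refine Finset.sum_le_sum fun u _ => Finset.sum_le_sum fun v _ => ?_
  simp only [Finset.mem_sdiff]
  by_cases huA : u ∈ A <;> by_cases huB : u ∈ B <;> by_cases hvA : v ∈ A <;>
    by_cases hvB : v ∈ B <;> simp [huA, huB, hvA, hvB]


theorem IsMinOptCut.cutFun_lt_of_ssubset {Y Z : Finset V}
    (hY : IsMinOptCut w Y) (hZY : Z ⊂ Y) (hZ : Z.Nonempty) : cutFun w Y < cutFun w Z :=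
  lt_of_not_ge fun hle =>
    hY.2 Z hZY ⟨hY.1.1.mono hZY.subset hZ, fun T hT => hle.trans (hY.1.2 T hT)⟩

theorem cutFun_le_of_add_cutFun_le {f : Finset V → WithTop NNRat}
    (hf : Monotone f) {X Z : Finset V} (hfX : f X ≠ ⊤) (hZX : Z ⊆ X)
    (hXZ : f X + (cutFun w X : WithTop NNRat) ≤ f Z + (cutFun w Z : WithTop NNRat)) :
    cutFun w X ≤ cutFun w Z := by
  have h : f X + (cutFun w X : WithTop NNRat) ≤ f X + (cutFun w Z : WithTop NNRat) :=
    hXZ.trans (add_le_add_left (hf hZX) _)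
  exact_mod_cast (WithTop.add_le_add_iff_left hfX).mp h

end Cut

theorem stmt8_general (w : V → V → NNRat) (hw : ∀ u v, w u v = w v u)
    (f : Finset V → WithTop NNRat)
    (hfsup : ∀ A B : Finset V, Disjoint A B → f A + f B ≤ f (A ∪ B))
    (X Y : Finset V)
    (hXsol : IsCutSolution X)
    (hXfin : f X + (cutFun w X : WithTop NNRat) < ⊤)
    (hXopt : ∀ Z : Finset V, IsCutSolution Z →
      f X + (cutFun w X : WithTop NNRat) ≤ f Z + (cutFun w Z : WithTop NNRat))
    (hY : IsMinOptCut w Y) :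
    X ⊆ Y ∨ X ⊆ Yᶜ ∨ IsOptCut w X := by
  have hf : Monotone f := monotone_of_superadditive hfsup
  have hfX : f X ≠ ⊤ := (WithTop.add_lt_top.mp hXfin).1.ne
  by_cases hXY : X ⊆ Y
  · exact Or.inl hXY
  by_cases hXYc : X ⊆ Yᶜ
  · exact Or.inr (Or.inl hXYc)
  have hXdiff : (X \ Y).Nonempty := Finset.sdiff_nonempty.mpr hXY
  have hXmeetsY : (X ∩ Y).Nonempty := by
    simpa [Finset.subset_compl_iff_disjoint_right, Finset.not_disjoint_iff_nonempty_inter]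
      using hXYc
  have hcutX : cutFun w X ≤ cutFun w (X \ Y) :=
    cutFun_le_of_add_cutFun_le hf hfX Finset.sdiff_subset
      (hXopt _ (hXsol.mono Finset.sdiff_subset hXdiff))
  have hYX : Y ⊆ X := by
    by_contra hYX
    have hYdiff : Y \ X ⊂ Y := by
      rw [← Finset.sdiff_inter_self_right]
      exact Finset.sdiff_ssubset Finset.inter_subset_right hXmeetsY
    have hcutYdiff := hY.cutFun_lt_of_ssubset hYdiff (Finset.sdiff_nonempty.mpr hYX)
    exact (add_lt_add_of_le_of_lt hcutX hcutYdiff).not_ge (cutFun_sdiff_add_cutFun_sdiff_le hw X Y)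
  have hcutY : cutFun w X ≤ cutFun w Y := cutFun_le_of_add_cutFun_le hf hfX hYX (hXopt Y hY.1.1)
  exact Or.inr (Or.inr ⟨hXsol, fun Z hZ => hcutY.trans (hY.1.2 Z hZ)⟩)

/-- If `X` is an optimal solution (of finite value) to the Generalised Min-Cut objective
`J = f + g` with `f` superadditive and `g` the cut function, and `Y` is a minimal optimal
solution to the underlying Min-Cut problem, then `X ⊆ Y`, or `X ⊆ V \ Y`, or `X` is itself
an optimal solution to the underlying Min-Cut problem. -/
theorem stmt8 (w : V → V → NNRat) (hw : ∀ u v, w u v = w v u)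
    (f : Finset V → WithTop NNRat) (hf0 : f ∅ = 0)
    (hfsup : ∀ A B : Finset V, Disjoint A B → f A + f B ≤ f (A ∪ B))
    (X Y : Finset V)
    (hXsol : IsCutSolution X)
    (hXfin : f X + (cutFun w X : WithTop NNRat) < ⊤)
    (hXopt : ∀ Z : Finset V, IsCutSolution Z →
      f X + (cutFun w X : WithTop NNRat) ≤ f Z + (cutFun w Z : WithTop NNRat))
    (hY : IsMinOptCut w Y) :
    X ⊆ Y ∨ X ⊆ Yᶜ ∨ IsOptCut w X :=
  stmt8_general w hw f hfsup X Y hXsol hXfin hXopt hY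
end

section
/- Let α, β ≥ 1, let J = f + g be a Generalised Min-Cut objective on V with optimum value λ, 0 < λ < ∞, f superadditive and g posimodular with g(∅)=0. Let X be an α-optimal solution (J(X) ≤ αλ) and Y an optimal Min-Cut solution for g. If g(Y) < λ/β, then J(X\Y) + J(X∩Y) < (α + 2/β)·λ. -/
/-!
Superadditivity of `f` gives `f (X \ Y) + f (X ∩ Y) ≤ f X`. Posimodularity of `g`, applied once
to `(X, Y)` and once to `(Y, Y \ X)`, gives `g (X \ Y) + g (X ∩ Y) ≤ g X + 2 g Y`; the auxiliary
term `g (Y \ X)` appears on both sides and cancels. Hence `J (X \ Y) + J (X ∩ Y) ≤ J X + 2 g Y`,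
and the two hypotheses `J X ≤ α λ` and `β g Y < λ` finish the estimate.
-/

variable {V : Type*} [Fintype V] [DecidableEq V]

section SetFunction

variable {ι M : Type*} [DecidableEq ι]

def IsSuperadditive [Add M] [LE M] (f : Finset ι → M) : Prop :=
  ∀ A B : Finset ι, Disjoint A B → f A + f B ≤ f (A ∪ B)

def IsPosimodular [Add M] [LE M] (g : Finset ι → M) : Prop :=
  ∀ A B : Finset ι, g (A \ B) + g (B \ A) ≤ g A + g B

theorem IsSuperadditive.sdiff_add_inter_le [Add M] [LE M] {f : Finset ι → M}
    (hf : IsSuperadditive f) (X Y : Finset ι) : f (X \ Y) + f (X ∩ Y) ≤ f X := by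
  simpa only [Finset.sdiff_union_inter] using
    hf (X \ Y) (X ∩ Y) (Finset.sdiff_disjoint.mono_right Finset.inter_subset_right)

section Posimodular

variable [AddCommMonoid M] [PartialOrder M] [CanonicallyOrderedAdd M]

theorem IsPosimodular.inter_le_add_sdiff {g : Finset ι → M} (hg : IsPosimodular g)
    (X Y : Finset ι) : g (X ∩ Y) ≤ g Y + g (Y \ X) := by
  have h := hg Y (Y \ X)
  rw [sdiff_sdiff_right_self, Finset.inf_eq_inter, Finset.inter_comm] at h
  exact le_self_add.trans h

theorem IsPosimodular.sdiff_add_inter_le [IsOrderedCancelAddMonoid M] {g : Finset ι → M}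
    (hg : IsPosimodular g) (X Y : Finset ι) :
    g (X \ Y) + g (X ∩ Y) ≤ g X + (g Y + g Y) := by
  have h := add_le_add (hg X Y) (hg.inter_le_add_sdiff X Y)
  rw [show g (X \ Y) + g (Y \ X) + g (X ∩ Y) = g (X \ Y) + g (X ∩ Y) + g (Y \ X) by abel,
    show g X + g Y + (g Y + g (Y \ X)) = g X + (g Y + g Y) + g (Y \ X) by abel] at h
  exact le_of_add_le_add_right h

end Posimodular

end SetFunction

theorem stmt10_general (f : Finset V → WithTop NNRat)
    (hfsup : ∀ A B : Finset V, Disjoint A B → f A + f B ≤ f (A ∪ B))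
    (g : Finset V → NNRat)
    (hgpos : ∀ A B : Finset V, g (A \ B) + g (B \ A) ≤ g A + g B)
    (α β : NNRat)
    (lam : WithTop NNRat) (hlt : lam < ⊤)
    (X : Finset V)
    (hXa : f X + (g X : WithTop NNRat) ≤ (α : WithTop NNRat) * lam)
    (Y : Finset V)
    (hgY : (β : WithTop NNRat) * (g Y : WithTop NNRat) < lam) :
    (β : WithTop NNRat) *
        ((f (X \ Y) + (g (X \ Y) : WithTop NNRat)) + (f (X ∩ Y) + (g (X ∩ Y) : WithTop NNRat)))
      < ((α * β : NNRat) : WithTop NNRat) * lam + ((2 : NNRat) : WithTop NNRat) * lam := by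
  obtain ⟨l, rfl⟩ := WithTop.ne_top_iff_exists.mp hlt.ne
  have hf := IsSuperadditive.sdiff_add_inter_le hfsup X Y
  have hg : (g (X \ Y) : WithTop NNRat) + g (X ∩ Y) ≤ g X + (g Y + g Y) := by
    exact_mod_cast IsPosimodular.sdiff_add_inter_le hgpos X Y
  have hgYl : β * g Y < l := by exact_mod_cast hgY
  calc (β : WithTop NNRat) * _
      = β * ((f (X \ Y) + f (X ∩ Y)) + ((g (X \ Y) : WithTop NNRat) + g (X ∩ Y))) := by ring
    _ ≤ β * (f X + ((g X : WithTop NNRat) + (g Y + g Y))) := by gcongr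
    _ = β * ((f X + g X) + ((g Y : WithTop NNRat) + g Y)) := by ring
    _ ≤ β * (α * l + ((g Y : WithTop NNRat) + g Y)) := by gcongr
    _ = ((α * β * l + (β * g Y + β * g Y) : NNRat) : WithTop NNRat) := by push_cast; ring
    _ < ((α * β * l + (l + l) : NNRat) : WithTop NNRat) := by
        exact_mod_cast add_lt_add_right (add_lt_add hgYl hgYl) _
    _ = _ := by rw [← two_mul]; norm_cast

/-- Let `J = f + g` with `f` superadditive and `g` posimodular, and let `λ` be the optimum
of `J` over solutions, with `0 < λ < ∞`. If `X` is an `α`-optimal solution to `J` and `Y`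
is an optimal Min-Cut solution for `g` with `g(Y) < λ/β`, then
`J(X\Y) + J(X∩Y) < (α + 2/β)·λ` (stated multiplied through by `β`). -/
theorem stmt10 (f : Finset V → WithTop NNRat) (hf0 : f ∅ = 0)
    (hfsup : ∀ A B : Finset V, Disjoint A B → f A + f B ≤ f (A ∪ B))
    (g : Finset V → NNRat) (hg0 : g ∅ = 0)
    (hgpos : ∀ A B : Finset V, g (A \ B) + g (B \ A) ≤ g A + g B)
    (α β : NNRat) (hα : 1 ≤ α) (hβ : 1 ≤ β)
    (lam : WithTop NNRat) (hl0 : 0 < lam) (hlt : lam < ⊤)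
    (hmin : ∀ Z : Finset V, IsCutSolution Z → lam ≤ f Z + (g Z : WithTop NNRat))
    (X : Finset V) (hX : IsCutSolution X)
    (hXa : f X + (g X : WithTop NNRat) ≤ (α : WithTop NNRat) * lam)
    (Y : Finset V) (hYsol : IsCutSolution Y)
    (hYopt : ∀ Z : Finset V, IsCutSolution Z → g Y ≤ g Z)
    (hgY : (β : WithTop NNRat) * (g Y : WithTop NNRat) < lam) :
    (β : WithTop NNRat) *
        ((f (X \ Y) + (g (X \ Y) : WithTop NNRat)) + (f (X ∩ Y) + (g (X ∩ Y) : WithTop NNRat)))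
      < ((α * β : NNRat) : WithTop NNRat) * lam + ((2 : NNRat) : WithTop NNRat) * lam :=
  stmt10_general f hfsup g hgpos α β lam hlt X hXa Y hgY
end

section
/- Let γ be an α-EDS set function on a finite set V with α ≥ 1. For each pair of distinct u, v ∈ V, let T_{u,v} ⊆ V be a set containing exactly one of u and v. Then for any R ⊆ S ⊆ V: α^{|S|+2} · ((|S|²+2)·γ(S) + Σ_{u∈R, v∈V\R, {u,v}⊆V distinct with |R∩{u,v}|=1} γ(T_{u,v})) ≥ γ(R), where the sum ranges over all unordered pairs {u,v} split by R. -/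
private lemma seq_removal {V I : Type*} [DecidableEq V] [DecidableEq I]
    (γ : Finset V → WithTop NNRat)
    (α : NNRat) (hα : 1 ≤ α)
    (hEDS : ∀ X Y : Finset V, γ (X \ Y) ≤ (α : WithTop NNRat) * (γ X + γ Y)) :
    ∀ (F : Finset I) (D : I → Finset V) (X : Finset V),
      γ (X \ F.biUnion D) ≤ (α : WithTop NNRat) ^ F.card * (γ X + ∑ i ∈ F, γ (D i)) := by
  have hβ : (1 : WithTop NNRat) ≤ (α : WithTop NNRat) := by exact_mod_cast hα
  intro F
  induction F using Finset.induction_on with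
  | empty => intro D X; simp
  | @insert a F ha ih =>
    intro D X
    have hsd : X \ (insert a F).biUnion D = (X \ F.biUnion D) \ D a := by
      ext x
      simp only [Finset.mem_sdiff, Finset.mem_biUnion, Finset.mem_insert]
      aesop
    rw [hsd]
    calc γ ((X \ F.biUnion D) \ D a)
        ≤ (α : WithTop NNRat) * (γ (X \ F.biUnion D) + γ (D a)) := hEDS _ _
      _ ≤ (α : WithTop NNRat) * ((α : WithTop NNRat) ^ F.card * (γ X + ∑ i ∈ F, γ (D i))
            + (α : WithTop NNRat) ^ F.card * γ (D a)) := by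
          gcongr
          · exact ih D X
          · exact le_mul_of_one_le_left' (one_le_pow_of_one_le' hβ _)
      _ = (α : WithTop NNRat) ^ (insert a F).card * (γ X + ∑ i ∈ insert a F, γ (D i)) := by
          rw [Finset.card_insert_of_notMem ha, Finset.sum_insert ha]
          ring

/-- Let `γ` be an `α`-EDS set function on a finite set `V` and, for each pair of distinct
`u, v ∈ V`, let `T u v` be a subset of `V` containing exactly one of `u` and `v`
(depending only on the unordered pair). Then for any `R ⊆ S ⊆ V`,
`α^{|S|+2}·((|S|²+2)·γ(S) + Σ_{pairs {u,v} split by R} γ(T u v)) ≥ γ(R)`,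
where the sum over pairs split by `R` is written as the sum over `u ∈ R`, `v ∉ R`. -/
theorem stmt12 {V : Type*} [Fintype V] [DecidableEq V]
    (γ : Finset V → WithTop NNRat) (h0 : γ ∅ = 0)
    (α : NNRat) (hα : 1 ≤ α)
    (hEDS : ∀ X Y : Finset V, γ (X \ Y) ≤ (α : WithTop NNRat) * (γ X + γ Y))
    (T : V → V → Finset V)
    (hTsym : ∀ u v, T u v = T v u)
    (hT : ∀ u v : V, u ≠ v → ((T u v) ∩ {u, v}).card = 1)
    (R S : Finset V) (hRS : R ⊆ S) :
    γ R ≤ (α : WithTop NNRat) ^ (S.card + 2) *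
      (((S.card ^ 2 + 2 : ℕ) : WithTop NNRat) * γ S +
        ∑ u ∈ R, ∑ v ∈ Rᶜ, γ (T u v)) := by
  classical
  have hβ : (1 : WithTop NNRat) ≤ (α : WithTop NNRat) := by exact_mod_cast hα
  set r := R.card with hr
  set m := (S \ R).card with hm
  have hmr : m + r = S.card := by
    rw [hm, hr, Finset.card_sdiff_of_subset hRS]
    exact Nat.sub_add_cancel (Finset.card_le_card hRS)
  -- the sets D u v : contain u, avoid v, with controlled γ
  set D : V → V → Finset V := fun u v => if u ∈ T u v then T u v else S \ T u v with hD
  have hDmem : ∀ u v, u ∈ R → v ∈ S \ R → u ∈ D u v ∧ v ∉ D u v := by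
    intro u v hu hv
    have hvS : v ∈ S := (Finset.mem_sdiff.mp hv).1
    have hvnR : v ∉ R := (Finset.mem_sdiff.mp hv).2
    have huv : u ≠ v := fun h => hvnR (h ▸ hu)
    have hcard := hT u v huv
    by_cases huT : u ∈ T u v
    · have hvT : v ∉ T u v := by
        intro hvT
        have hsub : ({u, v} : Finset V) ⊆ T u v ∩ {u, v} := by
          intro x hx
          rcases Finset.mem_insert.mp hx with h | h
          · subst h; exact Finset.mem_inter.mpr ⟨huT, Finset.mem_insert_self _ _⟩
          · rw [Finset.mem_singleton] at h; subst h
            exact Finset.mem_inter.mpr ⟨hvT, Finset.mem_insert.mpr (Or.inr (Finset.mem_singleton_self _))⟩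
        have := Finset.card_le_card hsub
        rw [hcard, Finset.card_pair huv] at this
        omega
      simp only [hD, if_pos huT]
      exact ⟨huT, hvT⟩
    · have hvT : v ∈ T u v := by
        by_contra hvT
        have : T u v ∩ {u, v} = ∅ := by
          ext x
          simp only [Finset.mem_inter, Finset.mem_insert, Finset.mem_singleton,
            Finset.notMem_empty, iff_false]
          rintro ⟨hx, h | h⟩ <;> subst h <;> [exact huT hx; exact hvT hx]
        rw [this] at hcard
        simp at hcard
      simp only [hD, if_neg huT]
      exact ⟨Finset.mem_sdiff.mpr ⟨hRS hu, huT⟩, fun h => (Finset.mem_sdiff.mp h).2 hvT⟩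
  have hDγ : ∀ u v, γ (D u v) ≤ (α : WithTop NNRat) * (γ S + γ (T u v)) := by
    intro u v
    simp only [hD]
    split
    · calc γ (T u v) ≤ γ S + γ (T u v) := le_add_self
        _ ≤ (α : WithTop NNRat) * (γ S + γ (T u v)) := le_mul_of_one_le_left' hβ
    · exact hEDS S (T u v)
  -- the sets C v : contain v (for v ∈ S \ R), avoid R
  have sumsplit : ∀ (F : Finset V) (c : WithTop NNRat) (f : V → WithTop NNRat),
      ∑ x ∈ F, (c + f x) = (F.card : WithTop NNRat) * c + ∑ x ∈ F, f x := by
    intro F c f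
    rw [Finset.sum_add_distrib, Finset.sum_const, nsmul_eq_mul]
  set C : V → Finset V := fun v => S \ R.biUnion (fun u => D u v) with hC
  have hCγ : ∀ v, γ (C v) ≤ (α : WithTop NNRat) ^ (r + 1) *
      ((((1 + r : ℕ)) : WithTop NNRat) * γ S + ∑ u ∈ R, γ (T u v)) := by
    intro v
    calc γ (C v) ≤ (α : WithTop NNRat) ^ r * (γ S + ∑ u ∈ R, γ (D u v)) :=
          seq_removal γ α hα hEDS R (fun u => D u v) S
      _ ≤ (α : WithTop NNRat) ^ r * (γ S + ∑ u ∈ R, (α : WithTop NNRat) * (γ S + γ (T u v))) := by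
          gcongr with u hu
          exact hDγ u v
      _ = (α : WithTop NNRat) ^ r * (γ S + (α : WithTop NNRat) * ((r : WithTop NNRat) * γ S + ∑ u ∈ R, γ (T u v))) := by
          congr 1
          congr 1
          simp only [mul_add]
          rw [sumsplit R ((α : WithTop NNRat) * γ S) (fun u => (α : WithTop NNRat) * γ (T u v)),
            ← Finset.mul_sum, ← hr]
          ring
      _ ≤ (α : WithTop NNRat) ^ r * ((α : WithTop NNRat) * γ S + (α : WithTop NNRat) * ((r : WithTop NNRat) * γ S + ∑ u ∈ R, γ (T u v))) := by
          gcongr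
          exact le_mul_of_one_le_left' hβ
      _ = (α : WithTop NNRat) ^ (r + 1) * ((((1 + r : ℕ)) : WithTop NNRat) * γ S + ∑ u ∈ R, γ (T u v)) := by
          push_cast
          ring
  -- R is obtained from S by removing the C v
  have hCmem : ∀ v x, x ∈ C v ↔ x ∈ S \ R.biUnion (fun u => D u v) := by
    intro v x; rw [hC]
  have hReq : R = S \ (S \ R).biUnion C := by
    apply Finset.Subset.antisymm
    · intro x hx
      refine Finset.mem_sdiff.mpr ⟨hRS hx, fun hmem => ?_⟩
      obtain ⟨v, hv, hxC⟩ := Finset.mem_biUnion.mp hmem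
      have hxD : x ∈ R.biUnion (fun u => D u v) :=
        Finset.mem_biUnion.mpr ⟨x, hx, (hDmem x v hx hv).1⟩
      exact (Finset.mem_sdiff.mp ((hCmem v x).mp hxC)).2 hxD
    · intro x hx
      obtain ⟨hxS, hxB⟩ := Finset.mem_sdiff.mp hx
      by_contra hxR
      have hxSR : x ∈ S \ R := Finset.mem_sdiff.mpr ⟨hxS, hxR⟩
      apply hxB
      refine Finset.mem_biUnion.mpr ⟨x, hxSR, (hCmem x x).mpr (Finset.mem_sdiff.mpr ⟨hxS, fun hmem => ?_⟩)⟩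
      obtain ⟨u, hu, hxD⟩ := Finset.mem_biUnion.mp hmem
      exact (hDmem u x hu hxSR).2 hxD
  -- main chain of inequalities
  have key : γ R ≤ (α : WithTop NNRat) ^ (m + r + 1) *
      ((((1 + m * (1 + r) : ℕ)) : WithTop NNRat) * γ S + ∑ v ∈ S \ R, ∑ u ∈ R, γ (T u v)) := by
    calc γ R = γ (S \ (S \ R).biUnion C) := by rw [← hReq]
      _ ≤ (α : WithTop NNRat) ^ m * (γ S + ∑ v ∈ S \ R, γ (C v)) :=
          seq_removal γ α hα hEDS (S \ R) C S
      _ ≤ (α : WithTop NNRat) ^ m * (γ S + ∑ v ∈ S \ R,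
            (α : WithTop NNRat) ^ (r + 1) * ((((1 + r : ℕ)) : WithTop NNRat) * γ S + ∑ u ∈ R, γ (T u v))) := by
          gcongr with v hv
          exact hCγ v
      _ = (α : WithTop NNRat) ^ m * (γ S + (α : WithTop NNRat) ^ (r + 1) *
            ((((m * (1 + r) : ℕ)) : WithTop NNRat) * γ S + ∑ v ∈ S \ R, ∑ u ∈ R, γ (T u v))) := by
          rw [← Finset.mul_sum,
            sumsplit (S \ R) ((((1 + r : ℕ)) : WithTop NNRat) * γ S) (fun v => ∑ u ∈ R, γ (T u v)),
            ← hm, Nat.cast_mul]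
          ring
      _ ≤ (α : WithTop NNRat) ^ m * ((α : WithTop NNRat) ^ (r + 1) * γ S + (α : WithTop NNRat) ^ (r + 1) *
            ((((m * (1 + r) : ℕ)) : WithTop NNRat) * γ S + ∑ v ∈ S \ R, ∑ u ∈ R, γ (T u v))) := by
          gcongr
          exact le_mul_of_one_le_left' (one_le_pow_of_one_le' hβ _)
      _ = (α : WithTop NNRat) ^ (m + r + 1) *
            ((((1 + m * (1 + r) : ℕ)) : WithTop NNRat) * γ S + ∑ v ∈ S \ R, ∑ u ∈ R, γ (T u v)) := by
          push_cast
          ring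
  refine key.trans ?_
  have hexp : m + r + 1 ≤ S.card + 2 := by omega
  have hcoef : (1 + m * (1 + r) : ℕ) ≤ S.card ^ 2 + 2 := by
    rw [← hmr]
    rcases Nat.eq_zero_or_pos m with h | h
    · simp [h]
    · have h2 : m ≤ m * m := Nat.le_mul_of_pos_left m h
      nlinarith
  have hsum : ∑ v ∈ S \ R, ∑ u ∈ R, γ (T u v) ≤ ∑ u ∈ R, ∑ v ∈ Rᶜ, γ (T u v) := by
    rw [Finset.sum_comm]
    apply Finset.sum_le_sum
    intro u hu
    apply Finset.sum_le_sum_of_subset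
    intro v hv
    exact Finset.mem_compl.mpr (Finset.mem_sdiff.mp hv).2
  have hcoef' : ((1 + m * (1 + r) : ℕ) : WithTop NNRat) ≤ ((S.card ^ 2 + 2 : ℕ) : WithTop NNRat) := by
    exact_mod_cast hcoef
  gcongr
end

section
/- Every α-EDS set function on an n-element set V is α^{n+2}(n³+2n)-approximable by a Generalised Min-Cut instance: there exist a superadditive set function f on V and a graph cut function g on V such that f(X)+g(X) ≤ γ(X) ≤ α^{n+2}(n³+2n)·(f(X)+g(X)) for all X ⊆ V. -/
/-!
With `s(u, v)` the least value of `γ` on a set separating `u` from `v` and `m(X)` the least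
value of `(|Z|² + 2) γ(Z)` over `Z ⊇ X`, the instance is `f(X) = |X| m(X) / (n³ + 2n)` and
`w = s / (n³ + 2n)`. Since `X` itself competes in all these minima and
`|X| (|X|² + 2) + |X| |Xᶜ| ≤ n³ + 2n`, we get `f + g ≤ γ`.

For the other bound, iterating the EDS inequality gives
`γ(S \ (D₁ ∪ ⋯ ∪ D_k)) ≤ α^k (γ(S) + Σ γ(Dᵢ))`. Take `Z ⊇ X` attaining `m(X)`. For
`v ∈ Z \ X`, removing from `Z`, for every `u ∈ X`, whichever of a minimal separator `S_uv` and
`Z \ S_uv` contains `u` leaves a set `T_v ∋ v` disjoint from `X`; removing all the `T_v` from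
`Z` leaves exactly `X`. Applying the iterated inequality at both levels yields
`γ(X) ≤ α^(|Z|+1) ((|Z|² + 2) γ(Z) + Σ_{u ∈ X, v ∈ Z \ X} s(u, v))`.
-/

open Finset

namespace GeneralisedMinCut

section EDS

variable {R : Type*} [CommSemiring R] [PartialOrder R] [CanonicallyOrderedAdd R]
  {V : Type*} [DecidableEq V] {γ : Finset V → R} {α : R}

theorem sdiff_biUnion_le (hα : 1 ≤ α) (hγ : ∀ X Y, γ (X \ Y) ≤ α * (γ X + γ Y))
    {ι : Type*} (F : Finset ι) (D : ι → Finset V) (S : Finset V) :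
    γ (S \ F.biUnion D) ≤ α ^ #F * (γ S + ∑ i ∈ F, γ (D i)) := by
  classical
  induction F using Finset.induction_on with
  | empty => simp
  | @insert a F ha ih =>
    rw [biUnion_insert, union_comm, ← sup_eq_union, ← sdiff_sdiff_left, card_insert_of_notMem ha,
      sum_insert ha, pow_succ]
    calc γ ((S \ F.biUnion D) \ D a)
        ≤ α * (α ^ #F * (γ S + ∑ i ∈ F, γ (D i)) + α ^ #F * γ (D a)) :=
          (hγ _ _).trans <| mul_le_mul_right
            (add_le_add ih (le_mul_of_one_le_left' (one_le_pow₀ hα))) α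
      _ = α ^ #F * α * (γ S + (γ (D a) + ∑ i ∈ F, γ (D i))) := by ring

theorem exists_mem_disjoint_le (hα : 1 ≤ α) (hγ : ∀ X Y, γ (X \ Y) ≤ α * (γ X + γ Y))
    {X Z : Finset V} (hXZ : X ⊆ Z) {v : V} (hv : v ∈ Z) (S : V → Finset V)
    (hS : ∀ u ∈ X, Xor (u ∈ S u) (v ∈ S u)) :
    ∃ T, v ∈ T ∧ Disjoint X T ∧ γ T ≤ α ^ (#X + 1) * ((#X + 1) * γ Z + ∑ u ∈ X, γ (S u)) := by
  classical
  set D : V → Finset V := fun u => if v ∈ S u then Z \ S u else S u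
  have hD : ∀ u ∈ X, u ∈ D u ∧ v ∉ D u := by
    intro u hu
    by_cases h : v ∈ S u
    · have hu' : u ∉ S u := by simpa [Xor, h] using hS u hu
      simp [D, h, hXZ hu, hu']
    · have hu' : u ∈ S u := by simpa [Xor, h] using hS u hu
      simp [D, h, hu']
  have hγD : ∀ u, γ (D u) ≤ α * (γ Z + γ (S u)) := by
    intro u
    by_cases h : v ∈ S u
    · simpa [D, h] using hγ Z (S u)
    · simpa [D, h] using le_mul_of_one_le_of_le hα le_add_self
  refine ⟨Z \ X.biUnion D, ?_, ?_, ?_⟩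
  · simp only [mem_sdiff, mem_biUnion, not_exists, not_and]
    exact ⟨hv, fun u hu => (hD u hu).2⟩
  · refine disjoint_left.2 fun u hu huT => (mem_sdiff.1 huT).2 ?_
    exact mem_biUnion.2 ⟨u, hu, (hD u hu).1⟩
  · calc γ (Z \ X.biUnion D)
        ≤ α ^ #X * (γ Z + ∑ u ∈ X, γ (D u)) := sdiff_biUnion_le hα hγ X D Z
      _ ≤ α ^ #X * (α * γ Z + ∑ u ∈ X, α * (γ Z + γ (S u))) := by
          gcongr with u
          exacts [le_mul_of_one_le_left' hα, hγD u]
      _ = α ^ (#X + 1) * ((#X + 1) * γ Z + ∑ u ∈ X, γ (S u)) := by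
          rw [← mul_sum, sum_add_distrib, sum_const, nsmul_eq_mul]
          ring

theorem le_pow_mul_of_separating (hα : 1 ≤ α) (hγ : ∀ X Y, γ (X \ Y) ≤ α * (γ X + γ Y))
    {X Z : Finset V} (hXZ : X ⊆ Z) (S : V → V → Finset V)
    (hS : ∀ u ∈ X, ∀ v ∈ Z \ X, Xor (u ∈ S u v) (v ∈ S u v)) :
    γ X ≤ α ^ (#Z + 1) * ((#Z ^ 2 + 2 : ℕ) * γ Z + ∑ v ∈ Z \ X, ∑ u ∈ X, γ (S u v)) := by
  have hT : ∀ v ∈ Z \ X, ∃ T, v ∈ T ∧ Disjoint X T ∧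
      γ T ≤ α ^ (#X + 1) * ((#X + 1) * γ Z + ∑ u ∈ X, γ (S u v)) := fun v hv =>
    exists_mem_disjoint_le hα hγ hXZ (mem_sdiff.1 hv).1 (S · v) fun u hu => hS u hu v hv
  choose! T hvT hXT hγT using hT
  have hX : X = Z \ (Z \ X).biUnion T := by
    ext y
    simp only [mem_sdiff, mem_biUnion, not_exists, not_and]
    refine ⟨fun hy => ⟨hXZ hy, fun v hv => disjoint_left.1 (hXT v (mem_sdiff.2 hv)) hy⟩,
      fun ⟨hyZ, hyT⟩ => ?_⟩
    by_contra hy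
    exact hyT y ⟨hyZ, hy⟩ (hvT y (mem_sdiff.2 ⟨hyZ, hy⟩))
  have hcard : #(Z \ X) + #X = #Z := card_sdiff_add_card_eq_card hXZ
  have hcoef : 1 + #(Z \ X) * (#X + 1) ≤ #Z ^ 2 + 2 := by
    rw [← hcard]
    nlinarith [Nat.le_mul_self #(Z \ X)]
  calc γ X = γ (Z \ (Z \ X).biUnion T) := congrArg γ hX
    _ ≤ α ^ #(Z \ X) * (γ Z + ∑ v ∈ Z \ X, γ (T v)) := sdiff_biUnion_le hα hγ _ T Z
    _ ≤ α ^ #(Z \ X) * (α ^ (#X + 1) * γ Z + ∑ v ∈ Z \ X,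
          α ^ (#X + 1) * ((#X + 1) * γ Z + ∑ u ∈ X, γ (S u v))) := by
        gcongr with v hv
        · exact le_mul_of_one_le_left' (one_le_pow₀ hα)
        · exact hγT v hv
    _ = α ^ (#Z + 1) *
          ((1 + #(Z \ X) * (#X + 1) : ℕ) * γ Z + ∑ v ∈ Z \ X, ∑ u ∈ X, γ (S u v)) := by
        rw [← hcard, ← mul_sum, sum_add_distrib, sum_const, nsmul_eq_mul]
        push_cast
        ring
    _ ≤ α ^ (#Z + 1) * ((#Z ^ 2 + 2 : ℕ) * γ Z + ∑ v ∈ Z \ X, ∑ u ∈ X, γ (S u v)) := by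
        gcongr

theorem card_mul_add_card_mul_le {m : Finset V → R} (hm : Monotone m) {A B : Finset V}
    (hAB : Disjoint A B) : #A * m A + #B * m B ≤ #(A ∪ B) * m (A ∪ B) := by
  rw [card_union_of_disjoint hAB, Nat.cast_add, add_mul]
  gcongr
  exacts [hm subset_union_left, hm subset_union_right]

end EDS

section MinCut

variable {R : Type*} [LinearOrder R] [OrderTop R] {V : Type*} [Fintype V] [DecidableEq V]
  (γ : Finset V → R)

noncomputable def minSep (u v : V) : R :=
  (univ.filter fun T : Finset V => Xor (u ∈ T) (v ∈ T)).inf γ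

theorem minSep_comm (u v : V) : minSep γ u v = minSep γ v u := by
  simp only [minSep, xor_comm]

theorem minSep_le {u v : V} {T : Finset V} (h : Xor (u ∈ T) (v ∈ T)) : minSep γ u v ≤ γ T :=
  inf_le (by simpa using h)

theorem exists_minSep_eq {u v : V} (h : u ≠ v) :
    ∃ T, Xor (u ∈ T) (v ∈ T) ∧ γ T = minSep γ u v := by
  have hne : (univ.filter fun T : Finset V => Xor (u ∈ T) (v ∈ T)).Nonempty :=
    ⟨{u}, mem_filter.2 ⟨mem_univ _, .inl ⟨mem_singleton_self u, notMem_singleton.2 h.symm⟩⟩⟩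
  obtain ⟨T, hT, hγT⟩ := exists_mem_eq_inf _ hne γ
  exact ⟨T, by simpa using hT, hγT.symm⟩

variable [CommSemiring R]

noncomputable def minSuperset (X : Finset V) : R :=
  (univ.filter (X ⊆ ·)).inf fun Z => ((#Z ^ 2 + 2 : ℕ) : R) * γ Z

theorem minSuperset_le {X Z : Finset V} (h : X ⊆ Z) :
    minSuperset γ X ≤ (#Z ^ 2 + 2 : ℕ) * γ Z :=
  inf_le (by simpa using h)

theorem minSuperset_mono : Monotone (minSuperset γ) := fun _ _ h =>
  inf_mono fun _ hZ => by simpa using h.trans (by simpa using hZ)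

theorem exists_minSuperset_eq (X : Finset V) :
    ∃ Z, X ⊆ Z ∧ minSuperset γ X = (#Z ^ 2 + 2 : ℕ) * γ Z := by
  obtain ⟨Z, hZ, hγZ⟩ := exists_mem_eq_inf _ ⟨univ, mem_filter.2 ⟨mem_univ _, subset_univ X⟩⟩
    fun Z : Finset V => ((#Z ^ 2 + 2 : ℕ) : R) * γ Z
  exact ⟨Z, by simpa using hZ, hγZ⟩

variable [CanonicallyOrderedAdd R] {γ} {α : R}

theorem le_pow_mul_minSuperset_add (hα : 1 ≤ α) (hγ : ∀ X Y, γ (X \ Y) ≤ α * (γ X + γ Y))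
    (X : Finset V) :
    γ X ≤ α ^ (Fintype.card V + 1) * (minSuperset γ X + ∑ u ∈ X, ∑ v ∈ Xᶜ, minSep γ u v) := by
  obtain ⟨Z, hXZ, hZ⟩ := exists_minSuperset_eq γ X
  choose! S hS hγS using fun u v (h : u ≠ v) => exists_minSep_eq γ h
  have hne : ∀ u ∈ X, ∀ v ∈ Z \ X, u ≠ v := fun u hu v hv huv =>
    (mem_sdiff.1 hv).2 (huv ▸ hu)
  calc γ X ≤ α ^ (#Z + 1) * ((#Z ^ 2 + 2 : ℕ) * γ Z + ∑ v ∈ Z \ X, ∑ u ∈ X, γ (S u v)) :=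
        le_pow_mul_of_separating hα hγ hXZ S fun u hu v hv => hS u v (hne u hu v hv)
    _ = α ^ (#Z + 1) * (minSuperset γ X + ∑ u ∈ X, ∑ v ∈ Z \ X, minSep γ u v) := by
        rw [hZ, sum_comm]
        congr 2
        exact sum_congr rfl fun u hu => sum_congr rfl fun v hv => hγS u v (hne u hu v hv)
    _ ≤ α ^ (Fintype.card V + 1) * (minSuperset γ X + ∑ u ∈ X, ∑ v ∈ Xᶜ, minSep γ u v) := by
        gcongr
        · exact card_le_univ Z
        · exact fun v hv => mem_compl.2 (mem_sdiff.1 hv).2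

theorem card_mul_minSuperset_add_le (X : Finset V) :
    #X * minSuperset γ X + ∑ u ∈ X, ∑ v ∈ Xᶜ, minSep γ u v ≤
      (Fintype.card V ^ 3 + 2 * Fintype.card V : ℕ) * γ X := by
  have hcoef : #X * (#X ^ 2 + 2) + #X * #Xᶜ ≤ Fintype.card V ^ 3 + 2 * Fintype.card V := by
    rw [← card_add_card_compl X]
    nlinarith [Nat.zero_le (#X * #X * #Xᶜ), Nat.zero_le (#X * #Xᶜ * #Xᶜ), Nat.zero_le (#Xᶜ ^ 3)]
  calc #X * minSuperset γ X + ∑ u ∈ X, ∑ v ∈ Xᶜ, minSep γ u v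
      ≤ #X * ((#X ^ 2 + 2 : ℕ) * γ X) + ∑ u ∈ X, ∑ v ∈ Xᶜ, γ X := by
        gcongr with u hu v hv
        · exact minSuperset_le γ subset_rfl
        · exact minSep_le γ (.inl ⟨hu, mem_compl.1 hv⟩)
    _ = (#X * (#X ^ 2 + 2) + #X * #Xᶜ : ℕ) * γ X := by
        simp only [sum_const, nsmul_eq_mul]
        push_cast
        ring
    _ ≤ (Fintype.card V ^ 3 + 2 * Fintype.card V : ℕ) * γ X := by
        gcongr

end MinCut
end GeneralisedMinCut

open GeneralisedMinCut

/-- Every `α`-EDS set function `γ` on an `n`-element set `V` is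
`α^{n+2}·(n³+2n)`-approximable by a Generalised Min-Cut instance: there are a
superadditive set function `f` and symmetric edge weights `w` (with cut function
`g(X) = Σ_{u ∈ X, v ∉ X} w(u,v)`) such that
`f(X)+g(X) ≤ γ(X) ≤ α^{n+2}(n³+2n)·(f(X)+g(X))` for all `X ⊆ V`. -/
theorem stmt13 {V : Type*} [Fintype V] [DecidableEq V]
    (γ : Finset V → WithTop NNRat) (h0 : γ ∅ = 0)
    (α : NNRat) (hα : 1 ≤ α)
    (hEDS : ∀ X Y : Finset V, γ (X \ Y) ≤ (α : WithTop NNRat) * (γ X + γ Y)) :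
    ∃ (f : Finset V → WithTop NNRat) (w : V → V → WithTop NNRat),
      f ∅ = 0 ∧
      (∀ A B : Finset V, Disjoint A B → f A + f B ≤ f (A ∪ B)) ∧
      (∀ u v, w u v = w v u) ∧
      (∀ X : Finset V,
        f X + ∑ u ∈ X, ∑ v ∈ Xᶜ, w u v ≤ γ X ∧
        γ X ≤ (α : WithTop NNRat) ^ (Fintype.card V + 2) *
          ((Fintype.card V ^ 3 + 2 * Fintype.card V : ℕ) : WithTop NNRat) *
          (f X + ∑ u ∈ X, ∑ v ∈ Xᶜ, w u v)) := by
  set C : ℕ := Fintype.card V ^ 3 + 2 * Fintype.card V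
  set c : WithTop ℚ≥0 := ↑((C : ℚ≥0)⁻¹)
  refine ⟨fun X => c * (#X * minSuperset γ X), fun u v => c * minSep γ u v, by simp,
    fun A B hAB => ?_, fun u v => congrArg (c * ·) (minSep_comm γ u v), fun X => ?_⟩
  · rw [← mul_add]
    exact mul_le_mul_right (card_mul_add_card_mul_le (minSuperset_mono γ) hAB) c
  rcases X.eq_empty_or_nonempty with rfl | hX
  · simp [h0]
  simp only [← mul_sum, ← mul_add]
  have hC : (C : WithTop ℚ≥0) * c = 1 := by
    have : C ≠ 0 := by
      have := hX.card_pos.trans_le (card_le_univ X)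
      omega
    rw [← WithTop.coe_natCast, ← WithTop.coe_mul, mul_inv_cancel₀ (Nat.cast_ne_zero.2 this),
      WithTop.coe_one]
  constructor
  · calc _ ≤ c * (C * γ X) := mul_le_mul_right (card_mul_minSuperset_add_le X) c
      _ = γ X := by rw [← mul_assoc, mul_comm c, hC, one_mul]
  · calc γ X
        ≤ α ^ (Fintype.card V + 1) * (minSuperset γ X + ∑ u ∈ X, ∑ v ∈ Xᶜ, minSep γ u v) :=
          le_pow_mul_minSuperset_add (by exact_mod_cast hα) hEDS X
      _ ≤ α ^ (Fintype.card V + 2) * (#X * minSuperset γ X + ∑ u ∈ X, ∑ v ∈ Xᶜ, minSep γ u v) := by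
          gcongr
          · exact_mod_cast hα
          · omega
          · exact le_mul_of_one_le_left' (by exact_mod_cast hX.card_pos)
      _ = _ := by rw [mul_assoc _ (C : WithTop ℚ≥0), ← mul_assoc (C : WithTop ℚ≥0), hC, one_mul]
end

section
/- The set function f defined by f(X) = (|X|/(n³+2n)) · min{(|Z|²+2)·γ(Z) : X ⊆ Z ⊆ V} is superadditive, for any set function γ on a finite set V with γ(∅) = 0 and |V| = n ≥ 1. -/
/-- The set function `f(X) = (|X|/(n³+2n)) · min{(|Z|²+2)·γ(Z) : X ⊆ Z ⊆ V}` used in the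
approximation of EDS set functions by GMC instances. -/
def fApprox {V : Type*} [Fintype V] [DecidableEq V]
    (γ : Finset V → WithTop NNRat) (X : Finset V) : WithTop NNRat :=
  ((((X.card : NNRat) / ((Fintype.card V : NNRat) ^ 3 + 2 * (Fintype.card V : NNRat)) :
      NNRat)) : WithTop NNRat) *
    ((Finset.univ.filter fun Z : Finset V => X ⊆ Z).inf fun Z =>
      ((Z.card ^ 2 + 2 : ℕ) : WithTop NNRat) * γ Z)

/-! `f(X) = |X| · m(X) / (n³ + 2n)` where `m(X)`, a minimum over the supersets of `X`, can only
grow with `X`; since `|X ∪ Y| = |X| + |Y|` for disjoint `X` and `Y`, superadditivity follows. -/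

open Finset

theorem monotone_inf_filter_superset {V α : Type*} [Fintype V] [DecidableEq V]
    [SemilatticeInf α] [OrderTop α] (g : Finset V → α) :
    Monotone fun X : Finset V => (univ.filter fun Z => X ⊆ Z).inf g :=
  fun _ _ hXY => inf_mono fun _ hZ => by
    simp only [mem_filter, mem_univ, true_and] at hZ ⊢
    exact hXY.trans hZ

theorem card_div_mul_add_card_div_mul_le {α : Type*} [DecidableEq α]
    {m : Finset α → WithTop ℚ≥0} (hm : Monotone m) (D : ℚ≥0) {X Y : Finset α}
    (hXY : Disjoint X Y) :
    ((X.card / D : ℚ≥0) : WithTop ℚ≥0) * m X + ((Y.card / D : ℚ≥0) : WithTop ℚ≥0) * m Y ≤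
      (((X ∪ Y).card / D : ℚ≥0) : WithTop ℚ≥0) * m (X ∪ Y) :=
  calc _ ≤ ((X.card / D : ℚ≥0) : WithTop ℚ≥0) * m (X ∪ Y) +
          ((Y.card / D : ℚ≥0) : WithTop ℚ≥0) * m (X ∪ Y) :=
        add_le_add (mul_le_mul_right (hm subset_union_left) _)
          (mul_le_mul_right (hm subset_union_right) _)
    _ = _ := by
        rw [← add_mul, ← WithTop.coe_add, ← add_div, ← Nat.cast_add, card_union_of_disjoint hXY]

theorem stmt14_general {V : Type*} [Fintype V] [DecidableEq V]
    (γ : Finset V → WithTop NNRat) :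
    fApprox γ (∅ : Finset V) = 0 ∧
    ∀ X Y : Finset V, Disjoint X Y → fApprox γ X + fApprox γ Y ≤ fApprox γ (X ∪ Y) :=
  ⟨by simp [fApprox], fun _ _ => card_div_mul_add_card_div_mul_le
    (monotone_inf_filter_superset fun Z => ((Z.card ^ 2 + 2 : ℕ) : WithTop ℚ≥0) * γ Z) _⟩

/-- The set function `f(X) = (|X|/(n³+2n))·min{(|Z|²+2)·γ(Z) : X ⊆ Z ⊆ V}` is
superadditive, for any set function `γ` with `γ(∅) = 0` on a finite set `V` with
`n = |V| ≥ 1`. -/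
theorem stmt14 {V : Type*} [Fintype V] [DecidableEq V]
    (γ : Finset V → WithTop NNRat) (h0 : γ ∅ = 0)
    (hn : 1 ≤ Fintype.card V) :
    fApprox γ (∅ : Finset V) = 0 ∧
    ∀ X Y : Finset V, Disjoint X Y → fApprox γ X + fApprox γ Y ≤ fApprox γ (X ∪ Y) :=
  stmt14_general γ
end

section
/- If a ℚ-valued (finite-valued) Boolean weighted relation γ admits the multimorphism ⟨min, min⟩, then γ is antitone (γ(x) ≥ γ(y) whenever x ≥ y coordinatewise) and γ is 1-EDS: for all tuples x, y, γ(x) + γ(y) − 2γ(0^r) ≥ γ(sub(x,y)) − γ(0^r). -/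
/-! On `Fin r → Bool`, componentwise `min` is `⊓`, `sub` is `\` and `0^r` is `⊥`, so both
claims are instances of lattice facts: the multimorphism inequality at a comparable pair
`y ≤ x` reads `2 γ(y) ≤ γ(x) + γ(y)`, and 1-EDS then follows from `x \ y ≤ x` and `⊥ ≤ y`. -/

section

variable {α β : Type*} [CommRing β] [LinearOrder β] [IsStrictOrderedRing β] {f : α → β}

theorem monotone_of_two_mul_map_inf_le [SemilatticeInf α]
    (h : ∀ x y, 2 * f (x ⊓ y) ≤ f x + f y) : Monotone f := by
  intro y x hyx
  have hxy := h x y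
  rw [inf_eq_right.mpr hyx] at hxy
  linarith

theorem Monotone.map_sdiff_sub_map_bot_le [GeneralizedCoheytingAlgebra α] (hf : Monotone f)
    (x y : α) : f (x \ y) - f ⊥ ≤ f x + f y - 2 * f ⊥ := by
  have hsdiff : f (x \ y) ≤ f x := hf sdiff_le
  have hbot : f ⊥ ≤ f y := hf bot_le
  linarith

end

/-- If a finite-valued Boolean weighted relation `γ` admits the multimorphism
`⟨min, min⟩`, then `γ(x) ≥ γ(y)` whenever `x ≥ y` coordinatewise, and `γ` is `1`-EDS:
`γ(x) + γ(y) − 2γ(0^r) ≥ γ(sub(x,y)) − γ(0^r)` for all `x, y`. -/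
theorem stmt15 {r : ℕ} (γ : (Fin r → Bool) → ℚ)
    (hmm : ∀ x y : Fin r → Bool, 2 * γ (fun i => min (x i) (y i)) ≤ γ x + γ y) :
    (∀ x y : Fin r → Bool, (∀ i, y i ≤ x i) → γ y ≤ γ x) ∧
    (∀ x y : Fin r → Bool,
      γ (fun i => bsub (x i) (y i)) - γ (fun _ => false) ≤
        γ x + γ y - 2 * γ (fun _ => false)) := by
  have hmono : Monotone γ := monotone_of_two_mul_map_inf_le hmm
  exact ⟨fun x y hyx => hmono hyx, hmono.map_sdiff_sub_map_bot_le⟩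
end

section
/- Let D be a finite domain, Γ a valued constraint language over D, and consider instances I over variables V with objective φ_I : D^V → ℚ≥0 given as a weighted sum of constraints of arity at most a_max. If s is an assignment with φ_I(s) ≥ r·opt_I (0 < ε ≤ r ≤ 1) and |V| ≥ r·|D|·a_max/ε, then reassigning the |D| variables with smallest contribution (contribution of x = the weighted sum of values of constraints whose scope contains x) bijectively to the labels of D yields a surjective assignment s' with φ_I(s') ≥ (r−ε)·sopt_I, where sopt_I is the maximum value over surjective assignments. -/
/-!
Changing `s` only on `U` can destroy at most the constraints whose scope meets `U`, and their
total weight is at most the sum of the contributions over `U`. Since `U` consists of the `|D|`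
smallest contributions, that sum is at most a `|D|/|V|` fraction of the total contribution, which
is at most `a_max·φ(s)`. The size assumption on `|V|` makes this loss at most `(ε/r)·φ(s)`, so
`φ(s') ≥ (1 - ε/r)·φ(s) ≥ (r - ε)·opt ≥ (r - ε)·sopt`.
-/

open Finset

section Contribution

variable {ι V R : Type*} [Fintype ι] [DecidableEq V]

def contribution [AddCommMonoid R] (Sc : ι → Finset V) (v : ι → R) (x : V) : R :=
  ∑ i ∈ univ.filter fun i => x ∈ Sc i, v i

theorem sum_contribution_eq [AddCommMonoid R] (Sc : ι → Finset V) (v : ι → R) (X : Finset V) :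
    ∑ x ∈ X, contribution Sc v x = ∑ i, #(Sc i ∩ X) • v i := by
  simp only [contribution, sum_filter]
  rw [sum_comm]
  refine sum_congr rfl fun i _ => ?_
  rw [← sum_filter, sum_const, filter_mem_eq_inter, inter_comm]

variable [AddCommMonoid R] [PartialOrder R] [IsOrderedAddMonoid R]

theorem sum_contribution_le [Fintype V] {Sc : ι → Finset V} {v : ι → R} {a : ℕ}
    (har : ∀ i, #(Sc i) ≤ a) (hv : ∀ i, 0 ≤ v i) :
    ∑ x, contribution Sc v x ≤ a • ∑ i, v i := by
  rw [sum_contribution_eq, smul_sum]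
  refine sum_le_sum fun i _ => ?_
  rw [inter_univ]
  exact nsmul_le_nsmul_left (hv i) (har i)

theorem sum_le_sum_add_sum_contribution {Sc : ι → Finset V} {f g : ι → R} (U : Finset V)
    (hf : ∀ i, 0 ≤ f i) (hg : ∀ i, 0 ≤ g i) (hfg : ∀ i, Disjoint (Sc i) U → f i = g i) :
    ∑ i, f i ≤ ∑ i, g i + ∑ x ∈ U, contribution Sc f x := by
  rw [sum_contribution_eq, ← sum_add_distrib]
  gcongr with i
  by_cases hi : Disjoint (Sc i) U
  · exact (hfg i hi).le.trans (le_add_of_nonneg_right (nsmul_nonneg (hf i) _))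
  · have hmeet : 1 ≤ #(Sc i ∩ U) := card_pos.mpr (not_disjoint_iff_nonempty_inter.mp hi)
    exact (le_smul_of_one_le_left (hf i) hmeet).trans (le_add_of_nonneg_left (hg i))

end Contribution

theorem card_nsmul_sum_le_of_forall_le_compl {α R : Type*} [Fintype α] [DecidableEq α]
    [AddCommMonoid R] [PartialOrder R] [IsOrderedAddMonoid R] (f : α → R) (U : Finset α)
    (hU : ∀ x ∈ U, ∀ y, y ∉ U → f x ≤ f y) :
    Fintype.card α • ∑ x ∈ U, f x ≤ #U • ∑ x, f x := by
  have hcompl : #Uᶜ • ∑ x ∈ U, f x ≤ #U • ∑ y ∈ Uᶜ, f y := by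
    refine (card_nsmul_le_sum Uᶜ (fun y => #U • f y) _ fun y hy => ?_).trans_eq smul_sum.symm
    exact sum_le_card_nsmul U f (f y) fun x hx => hU x hx y (mem_compl.mp hy)
  calc Fintype.card α • ∑ x ∈ U, f x = #U • ∑ x ∈ U, f x + #Uᶜ • ∑ x ∈ U, f x := by
        rw [← add_nsmul, card_add_card_compl]
    _ ≤ #U • ∑ x ∈ U, f x + #U • ∑ y ∈ Uᶜ, f y := by gcongr
    _ = #U • ∑ x, f x := by rw [← smul_add, sum_add_sum_compl]

section Arithmetic

variable {K : Type*} [Field K] [LinearOrder K] [IsStrictOrderedRing K]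

theorem mul_le_mul_of_card_mul_le {n d a r ε A b : K} (hn : 0 < n) (hr : 0 ≤ r) (hb : 0 ≤ b)
    (hε : 0 < ε) (havg : n * A ≤ d * (a * b)) (hbig : r * d * a / ε ≤ n) :
    r * A ≤ ε * b := by
  rw [div_le_iff₀ hε] at hbig
  refine le_of_mul_le_mul_left ?_ hn
  calc n * (r * A) = r * (n * A) := by ring
    _ ≤ r * (d * (a * b)) := mul_le_mul_of_nonneg_left havg hr
    _ = r * d * a * b := by ring
    _ ≤ n * ε * b := mul_le_mul_of_nonneg_right hbig hb
    _ = n * (ε * b) := by ring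

theorem sub_mul_le_of_le_add {r ε opt sopt a b A : K} (hε : 0 < ε) (hεr : ε ≤ r)
    (hsopt : sopt ≤ opt) (ha : r * opt ≤ a) (hab : a ≤ b + A) (hA : r * A ≤ ε * a) :
    (r - ε) * sopt ≤ b := by
  have hr : 0 < r := hε.trans_le hεr
  refine le_of_mul_le_mul_left ?_ hr
  calc r * ((r - ε) * sopt) = (r - ε) * (r * sopt) := by ring
    _ ≤ (r - ε) * (r * opt) := by gcongr
    _ ≤ (r - ε) * a := mul_le_mul_of_nonneg_left ha (sub_nonneg.mpr hεr)
    _ ≤ r * b := by nlinarith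

end Arithmetic

theorem stmt16_general {V D : Type*} [Fintype V] [DecidableEq V] [Fintype D]
    (q : ℕ) (w : Fin q → NNRat) (c : Fin q → (V → D) → NNRat)
    (Sc : Fin q → Finset V) (amax : ℕ)
    (har : ∀ i, (Sc i).card ≤ amax)
    (hdep : ∀ i, ∀ s t : V → D, (∀ x ∈ Sc i, s x = t x) → c i s = c i t)
    (φ : (V → D) → NNRat) (hφ : ∀ s, φ s = ∑ i, w i * c i s)
    (opt sopt : NNRat)
    (hoptub : ∀ t : V → D, φ t ≤ opt)
    (hsoptatt : ∃ t : V → D, Function.Surjective t ∧ φ t = sopt)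
    (r ε : ℚ) (hε : 0 < ε) (hεr : ε ≤ r)
    (s : V → D) (hs : r * (opt : ℚ) ≤ (φ s : ℚ))
    (hbig : r * (Fintype.card D : ℚ) * (amax : ℚ) / ε ≤ (Fintype.card V : ℚ))
    (U : Finset V) (hUcard : U.card = Fintype.card D)
    (hUmin : ∀ x ∈ U, ∀ y : V, y ∉ U →
      (∑ i ∈ Finset.univ.filter fun i => x ∈ Sc i, w i * c i s) ≤
        (∑ i ∈ Finset.univ.filter fun i => y ∈ Sc i, w i * c i s))
    (s' : V → D) (hs'out : ∀ x : V, x ∉ U → s' x = s x)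
    (hs'bij : Set.BijOn s' (↑U) Set.univ) :
    Function.Surjective s' ∧ (r - ε) * (sopt : ℚ) ≤ (φ s' : ℚ) := by
  refine ⟨fun b => (hs'bij.surjOn trivial).imp fun _ => And.right, ?_⟩
  set A := ∑ x ∈ U, contribution Sc (fun i => w i * c i s) x
  have hloss : φ s ≤ φ s' + A := by
    rw [hφ, hφ]
    refine sum_le_sum_add_sum_contribution U (fun _ => zero_le) (fun _ => zero_le) fun i hi => ?_
    rw [hdep i s s' fun x hx => (hs'out x (disjoint_left.mp hi hx)).symm]
  have havg : Fintype.card V • A ≤ Fintype.card D • (amax • φ s) := by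
    refine (card_nsmul_sum_le_of_forall_le_compl _ U hUmin).trans ?_
    rw [hUcard, hφ]
    exact nsmul_le_nsmul_right (sum_contribution_le har fun _ => zero_le) _
  have hA : r * A ≤ ε * φ s := by
    rcases (Fintype.card V).eq_zero_or_pos with hV | hV
    · have hU : U = ∅ := card_eq_zero.mp (Nat.le_zero.mp (hV ▸ card_le_univ U))
      simp only [A, hU, sum_empty, NNRat.cast_zero, mul_zero]
      positivity
    · refine mul_le_mul_of_card_mul_le (by exact_mod_cast hV) (hε.le.trans hεr) (by positivity) hε
        ?_ hbig
      exact_mod_cast havg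
  obtain ⟨t, -, rfl⟩ := hsoptatt
  exact sub_mul_le_of_le_add hε hεr (by exact_mod_cast hoptub t) hs (by exact_mod_cast hloss) hA

/-- Given a Max-VCSP instance with objective `φ(s) = Σᵢ wᵢ·cᵢ(s)`, where each constraint
`cᵢ` depends only on its scope `Sc i` of size at most `a_max`, `opt` is the maximum value
over all assignments and `sopt` the maximum over surjective assignments: if `s` is an
`r`-approximate solution (`φ(s) ≥ r·opt`), `0 < ε ≤ r ≤ 1`, and
`|V| ≥ r·|D|·a_max/ε`, then for any set `U` of `|D|` variables of smallest contribution,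
reassigning the variables of `U` bijectively onto `D` (keeping the rest as in `s`) yields
a surjective assignment `s'` with `φ(s') ≥ (r−ε)·sopt`. -/
theorem stmt16 {V D : Type*} [Fintype V] [DecidableEq V] [Fintype D] [DecidableEq D]
    (q : ℕ) (w : Fin q → NNRat) (c : Fin q → (V → D) → NNRat)
    (Sc : Fin q → Finset V) (amax : ℕ)
    (har : ∀ i, (Sc i).card ≤ amax)
    (hdep : ∀ i, ∀ s t : V → D, (∀ x ∈ Sc i, s x = t x) → c i s = c i t)
    (φ : (V → D) → NNRat) (hφ : ∀ s, φ s = ∑ i, w i * c i s)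
    (opt sopt : NNRat)
    (hoptub : ∀ t : V → D, φ t ≤ opt)
    (hoptatt : ∃ t : V → D, φ t = opt)
    (hsoptub : ∀ t : V → D, Function.Surjective t → φ t ≤ sopt)
    (hsoptatt : ∃ t : V → D, Function.Surjective t ∧ φ t = sopt)
    (r ε : ℚ) (hε : 0 < ε) (hεr : ε ≤ r) (hr : r ≤ 1)
    (s : V → D) (hs : r * (opt : ℚ) ≤ (φ s : ℚ))
    (hbig : r * (Fintype.card D : ℚ) * (amax : ℚ) / ε ≤ (Fintype.card V : ℚ))
    (U : Finset V) (hUcard : U.card = Fintype.card D)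
    (hUmin : ∀ x ∈ U, ∀ y : V, y ∉ U →
      (∑ i ∈ Finset.univ.filter fun i => x ∈ Sc i, w i * c i s) ≤
        (∑ i ∈ Finset.univ.filter fun i => y ∈ Sc i, w i * c i s))
    (s' : V → D) (hs'out : ∀ x : V, x ∉ U → s' x = s x)
    (hs'bij : Set.BijOn s' (↑U) Set.univ) :
    Function.Surjective s' ∧ (r - ε) * (sopt : ℚ) ≤ (φ s' : ℚ) :=
  stmt16_general q w c Sc amax har hdep φ hφ opt sopt hoptub hsoptatt r ε hε hεr s hs hbig U hUcard
    hUmin s' hs'out hs'bij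
end
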